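/- arXiv:1305.4243 — 9 statements merged into one kernel-verified Lean document; each statement's English description precedes it below -/
import Mathlib

section
/- If every eigenvalue λ of (Bᵀ ⊗ A)·P satisfies λ ≠ 1, then for every n×n matrix C the equation X = A Xᵀ B + C has a unique solution X. -/
open Matrix
open scoped Kronecker

/-- `vec` stacks the columns of a matrix into one (column) vector. -/
def vec {n : ℕ} (X : Matrix (Fin n) (Fin n) ℝ) : Fin n × Fin n → ℝ :=
  fun p => X p.2 p.1

/-! Writing `M = (Bᵀ ⊗ A) P`, vectorisation turns `X ↦ A Xᵀ B` into `v ↦ M v`, so the equation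
becomes `(1 - M) vec X = vec C`. If `1` is not an eigenvalue of `M`, then `1 - M` is invertible,
and since `vec` is a bijection the equation has exactly one solution. -/

namespace Matrix

variable {m R : Type*} [Fintype m] [CommRing R]

theorem vec_mul_transpose_mul {P : Matrix (m × m) (m × m) R}
    (hP : ∀ X : Matrix m m R, P *ᵥ X.vec = Xᵀ.vec) (A B X : Matrix m m R) :
    (A * Xᵀ * B).vec = ((Bᵀ ⊗ₖ A) * P) *ᵥ X.vec := by
  rw [← mulVec_mulVec, hP, kronecker_mulVec_vec, transpose_transpose]

variable [DecidableEq m]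

theorem eq_mul_transpose_mul_add_iff {P : Matrix (m × m) (m × m) R}
    (hP : ∀ X : Matrix m m R, P *ᵥ X.vec = Xᵀ.vec) (A B C X : Matrix m m R) :
    X = A * Xᵀ * B + C ↔ (1 - (Bᵀ ⊗ₖ A) * P) *ᵥ X.vec = C.vec := by
  rw [← vec_inj, vec_add, vec_mul_transpose_mul hP, sub_mulVec, one_mulVec, sub_eq_iff_eq_add']

theorem existsUnique_eq_mul_transpose_mul_add {P : Matrix (m × m) (m × m) R}
    (hP : ∀ X : Matrix m m R, P *ᵥ X.vec = Xᵀ.vec) {A B : Matrix m m R}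
    (hunit : IsUnit (1 - (Bᵀ ⊗ₖ A) * P)) (C : Matrix m m R) :
    ∃! X : Matrix m m R, X = A * Xᵀ * B + C := by
  have hmulVec : Function.Bijective (1 - (Bᵀ ⊗ₖ A) * P).mulVec :=
    ⟨mulVec_injective_of_isUnit hunit, mulVec_surjective_iff_isUnit.mpr hunit⟩
  have hbij : Function.Bijective fun X : Matrix m m R => (1 - (Bᵀ ⊗ₖ A) * P) *ᵥ X.vec :=
    hmulVec.comp vec_bijective
  simpa only [eq_mul_transpose_mul_add_iff hP] using hbij.existsUnique C.vec

end Matrix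

/-- If every eigenvalue `μ` of `(Bᵀ ⊗ A) P` satisfies `μ ≠ 1`, where `P` is the
commutation matrix, then for every `n × n` matrix `C` the ⊤-Stein equation
`X = A Xᵀ B + C` has a unique solution. -/
theorem tstein_unique_of_spectrum {n : ℕ}
    (P : Matrix (Fin n × Fin n) (Fin n × Fin n) ℝ)
    (hP : ∀ X : Matrix (Fin n) (Fin n) ℝ, P.mulVec (_root_.vec X) = _root_.vec Xᵀ)
    (A B : Matrix (Fin n) (Fin n) ℝ)
    (h : ∀ μ ∈ spectrum ℝ ((Bᵀ ⊗ₖ A) * P), μ ≠ 1) :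
    ∀ C : Matrix (Fin n) (Fin n) ℝ,
      ∃! X : Matrix (Fin n) (Fin n) ℝ, X = A * Xᵀ * B + C := by
  have hunit : IsUnit (1 - (Bᵀ ⊗ₖ A) * P) := by
    simpa using spectrum.notMem_iff.mp fun h1 => h 1 h1 rfl
  exact existsUnique_eq_mul_transpose_mul_add hP hunit
end

section
/- If λ and μ are eigenvalues of AᵀB with λμ = 1 and λ ≠ −1 (or λ = μ = −1 with −1 not a simple eigenvalue), then the operator X ↦ X − A Xᵀ B on ℂ^{n×n} is not injective. -/
/-!
Write `M = Bᵀ A`, the transpose of `Aᵀ B`, and `T X = A Xᵀ B`. For every `S`,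
`T (A S) = A (M S)ᵀ`, so any `S ≠ 0` with `M S = Sᵀ` gives the nonzero fixed point `A S` of `T`
(nonzero because `Sᵀ = Bᵀ (A S)`). Such an `S` is built from eigenvectors of `M`:
if `M q = μ q` and `M w = λ w` with `λ μ = 1`, then `S = q wᵀ + μ w qᵀ` works, which is nonzero when
`q, w` are independent (automatic for `λ ≠ μ`); if `λ = μ = 1`, take `S = q qᵀ`.
If `λ = μ = -1` has algebraic multiplicity at least two, either the eigenspace has dimension at
least two, or there is a Jordan chain `M q₁ = -q₁`, `M q₂ = -q₂ + q₁`, for which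
`S = q₁ (q₁ - 2 q₂)ᵀ + 2 q₂ q₁ᵀ` works.
-/

open Matrix Module

namespace Module.End

theorem exists_apply_ne_zero_apply_apply_eq_zero {R V : Type*} [Ring R] [AddCommGroup V]
    [Module R V] (g : End R V) {u : V} (hu : g u ≠ 0) {k : ℕ} (hk : (g ^ k) u = 0) :
    ∃ v, g v ≠ 0 ∧ g (g v) = 0 := by
  induction k generalizing u with
  | zero => exact absurd (by rw [pow_zero, one_apply] at hk; rw [hk, map_zero]) hu
  | succ k ih =>
    by_cases hgu : g (g u) = 0
    · exact ⟨u, hu, hgu⟩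
    · exact ih hgu (by rwa [← mul_apply, ← pow_succ])

theorem exists_pair_or_chain_of_one_lt_rootMultiplicity {K V : Type*} [Field K] [AddCommGroup V]
    [Module K V] [FiniteDimensional K V] (f : End K V) {μ : K}
    (h : 1 < f.charpoly.rootMultiplicity μ) :
    (∃ x y, f x = μ • x ∧ f y = μ • y ∧ LinearIndependent K ![x, y]) ∨
      ∃ x y, x ≠ 0 ∧ f x = μ • x ∧ f y = μ • y + x := by
  by_cases hgeom : 1 < finrank K (f.eigenspace μ)
  · left
    have : Nontrivial (f.eigenspace μ) := nontrivial_of_finrank_pos (zero_lt_one.trans hgeom)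
    obtain ⟨x, hx⟩ := exists_ne (0 : f.eigenspace μ)
    obtain ⟨y, hxy⟩ := exists_linearIndependent_pair_of_one_lt_finrank hgeom hx
    refine ⟨x, y, mem_eigenspace_iff.mp x.2, mem_eigenspace_iff.mp y.2, ?_⟩
    rw [LinearIndependent.pair_iff] at hxy ⊢
    exact fun s t hst => hxy s t (Subtype.ext (by simpa using hst))
  · right
    have hlt : f.eigenspace μ < f.maxGenEigenspace μ := by
      refine lt_of_le_of_ne eigenspace_le_maxGenEigenspace fun heq => hgeom ?_
      rwa [heq, LinearMap.finrank_maxGenEigenspace_eq]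
    obtain ⟨u, hu, hu'⟩ := SetLike.exists_of_lt hlt
    obtain ⟨k, hk⟩ := (mem_maxGenEigenspace f μ u).mp hu
    have hgu : (f - μ • 1) u ≠ 0 := by
      rw [LinearMap.sub_apply, LinearMap.smul_apply, one_apply, sub_ne_zero]
      exact fun hfu => hu' (mem_eigenspace_iff.mpr hfu)
    obtain ⟨y, hy, hy'⟩ := (f - μ • 1).exists_apply_ne_zero_apply_apply_eq_zero hgu hk
    refine ⟨(f - μ • 1) y, y, hy, ?_, ?_⟩
    · rwa [LinearMap.sub_apply, sub_eq_zero] at hy'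
    · simp

end Module.End

namespace Matrix

variable {K ι : Type*}

theorem eq_zero_of_vecMulVec_add_vecMulVec_eq_zero [CommRing K] {u v a b : ι → K}
    (huv : LinearIndependent K ![u, v]) (h : vecMulVec u a + vecMulVec v b = 0) :
    a = 0 ∧ b = 0 := by
  have hcol : ∀ j, a j = 0 ∧ b j = 0 := fun j =>
    LinearIndependent.pair_iff.mp huv _ _ <| funext fun i => by
      simpa [vecMulVec_apply, mul_comm] using congrFun (congrFun h i) j
  exact ⟨funext fun j => (hcol j).1, funext fun j => (hcol j).2⟩

variable [Fintype ι]

theorem spectrum_transpose [Field K] [DecidableEq ι] (M : Matrix ι ι K) :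
    spectrum K Mᵀ = spectrum K M := by
  ext c
  simp only [mem_spectrum_iff_isRoot_charpoly, charpoly_transpose]

theorem not_injective_sub_mul_transpose_mul [CommRing K] {A B S : Matrix ι ι K} (hS : S ≠ 0)
    (h : Bᵀ * A * S = Sᵀ) :
    ¬ Function.Injective (fun X : Matrix ι ι K => X - A * Xᵀ * B) := by
  have hfix : A * (A * S)ᵀ * B = A * S := calc
    A * (A * S)ᵀ * B = A * (Bᵀ * A * S)ᵀ := by
      simp only [transpose_mul, transpose_transpose, Matrix.mul_assoc]
    _ = A * S := by rw [h, transpose_transpose]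
  have hAS : A * S ≠ 0 := fun h0 => hS <| by
    rw [← transpose_eq_zero, ← h, Matrix.mul_assoc, h0, Matrix.mul_zero]
  intro hinj
  exact hAS <| hinj <| by simp only [hfix, sub_self, transpose_zero, Matrix.mul_zero,
    Matrix.zero_mul]

variable [Field K] {M : Matrix ι ι K}

theorem exists_mul_eq_transpose_of_mulVec_eq_smul {lam mu : K} {q w : ι → K}
    (hq : M *ᵥ q = mu • q) (hw : M *ᵥ w = lam • w) (hprod : lam * mu = 1)
    (hqw : LinearIndependent K ![q, w]) :
    ∃ S : Matrix ι ι K, S ≠ 0 ∧ M * S = Sᵀ := by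
  refine ⟨vecMulVec q w + vecMulVec w (mu • q), fun h0 => ?_, ?_⟩
  · have hw0 : w ≠ 0 := by simpa using hqw.ne_zero 1
    exact hw0 (eq_zero_of_vecMulVec_add_vecMulVec_eq_zero hqw h0).1
  · ext i j
    simp only [Matrix.mul_add, mul_vecMulVec, hq, hw, transpose_add, transpose_vecMulVec,
      Matrix.add_apply, vecMulVec_apply, Pi.smul_apply, smul_eq_mul]
    linear_combination w i * q j * hprod

theorem exists_mul_eq_transpose_of_mulVec_eq_self {q : ι → K} (hq0 : q ≠ 0)
    (hq : M *ᵥ q = q) : ∃ S : Matrix ι ι K, S ≠ 0 ∧ M * S = Sᵀ := by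
  refine ⟨vecMulVec q q, fun h0 => hq0 ?_, by rw [mul_vecMulVec, hq, transpose_vecMulVec]⟩
  funext i
  exact mul_self_eq_zero.mp (congrFun (congrFun h0 i) i)

theorem exists_mul_eq_transpose_of_jordan_chain [NeZero (2 : K)] {q₁ q₂ : ι → K} (hq₁ : q₁ ≠ 0)
    (h₁ : M *ᵥ q₁ = -q₁) (h₂ : M *ᵥ q₂ = -q₂ + q₁) :
    ∃ S : Matrix ι ι K, S ≠ 0 ∧ M * S = Sᵀ := by
  have hind : LinearIndependent K ![q₁, q₂] := by
    refine LinearIndependent.pair_iff.mpr fun s t hst => ?_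
    have hMst := congrArg (M *ᵥ ·) hst
    simp only [mulVec_add, mulVec_smul, h₁, h₂, mulVec_zero] at hMst
    have ht : t • q₁ = 0 := calc
      t • q₁ = (s • q₁ + t • q₂) + (s • -q₁ + t • (-q₂ + q₁)) := by module
      _ = 0 := by rw [hst, hMst, add_zero]
    have ht0 : t = 0 := (smul_eq_zero.mp ht).resolve_right hq₁
    subst ht0
    simpa [hq₁] using hst
  refine ⟨vecMulVec q₁ (q₁ - (2 : K) • q₂) + vecMulVec q₂ ((2 : K) • q₁), fun h0 => ?_, ?_⟩
  · have := (eq_zero_of_vecMulVec_add_vecMulVec_eq_zero hind h0).2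
    exact hq₁ ((smul_eq_zero.mp this).resolve_left two_ne_zero)
  · ext i j
    simp only [Matrix.mul_add, mul_vecMulVec, h₁, h₂, transpose_add,
      transpose_vecMulVec, Matrix.add_apply, vecMulVec_apply, Pi.smul_apply, Pi.sub_apply,
      Pi.neg_apply, Pi.add_apply, smul_eq_mul]
    ring

end Matrix

/-- If `λ` and `μ` are eigenvalues of `Aᵀ B` with `λ μ = 1`, and either `λ ≠ −1`,
or `λ = μ = −1` with `−1` not a simple eigenvalue (algebraic multiplicity `> 1`),
then the operator `X ↦ X − A Xᵀ B` on `ℂ^{n×n}` is not injective. -/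
theorem tstein_not_injective {n : ℕ} (A B : Matrix (Fin n) (Fin n) ℂ) (lam mu : ℂ)
    (hlam : lam ∈ spectrum ℂ (Aᵀ * B)) (hmu : mu ∈ spectrum ℂ (Aᵀ * B))
    (hprod : lam * mu = 1)
    (hcase : lam ≠ -1 ∨
      (lam = -1 ∧ mu = -1 ∧ 1 < (Aᵀ * B).charpoly.roots.count (-1))) :
    ¬ Function.Injective (fun X : Matrix (Fin n) (Fin n) ℂ => X - A * Xᵀ * B) := by
  have hM : (Aᵀ * B)ᵀ = Bᵀ * A := by rw [transpose_mul, transpose_transpose]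
  have heig : ∀ c ∈ spectrum ℂ (Aᵀ * B), End.HasEigenvalue (toLin' (Bᵀ * A)) c := fun c hc => by
    rwa [End.hasEigenvalue_iff_mem_spectrum, spectrum_toLin', ← hM, spectrum_transpose]
  obtain ⟨S, hS, hMS⟩ : ∃ S : Matrix (Fin n) (Fin n) ℂ, S ≠ 0 ∧ Bᵀ * A * S = Sᵀ := by
    rcases hcase with hlam1 | ⟨rfl, rfl, hmult⟩
    · obtain ⟨q, hq⟩ := (heig mu hmu).exists_hasEigenvector
      by_cases hlm : lam = mu
      · obtain rfl : mu = 1 := by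
          subst hlm
          exact (mul_self_eq_one_iff.mp hprod).resolve_right hlam1
        exact exists_mul_eq_transpose_of_mulVec_eq_self hq.2 (by simpa using hq.apply_eq_smul)
      · obtain ⟨w, hw⟩ := (heig lam hlam).exists_hasEigenvector
        refine exists_mul_eq_transpose_of_mulVec_eq_smul (by simpa using hq.apply_eq_smul)
          (by simpa using hw.apply_eq_smul) hprod ?_
        exact End.eigenvectors_linearIndependent' _ ![mu, lam]
          (injective_pair_iff_ne.mpr (Ne.symm hlm)) _ (Fin.forall_fin_two.mpr ⟨hq, hw⟩)
    · rw [Polynomial.count_roots, ← charpoly_transpose, hM, ← charpoly_toLin'] at hmult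
      rcases End.exists_pair_or_chain_of_one_lt_rootMultiplicity _ hmult with
        ⟨x, y, hx, hy, hxy⟩ | ⟨x, y, hx0, hx, hy⟩
      · exact exists_mul_eq_transpose_of_mulVec_eq_smul (by simpa using hx) (by simpa using hy)
          hprod hxy
      · exact exists_mul_eq_transpose_of_jordan_chain hx0 (by simpa using hx) (by simpa using hy)
  exact not_injective_sub_mul_transpose_mul hS hMS
end

section
/- Suppose A₁ − λB₁ ∈ ℂ^{n₁×n₁} and A₂ − λB₂ ∈ ℂ^{n₂×n₂} are regular matrix pencils with disjoint spectra. Then the only matrices U, V ∈ ℂ^{n₁×n₂} satisfying A₁U = V A₂ and B₁U = V B₂ are U = V = 0. -/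
/-!
Choose `(a, b)` at which both pencils are nonsingular (the product of their determinant forms is a
nonzero polynomial) and `(c, d)` independent of it. For `Mᵢ = b Aᵢ - a Bᵢ` and `Nᵢ = d Aᵢ - c Bᵢ`
the hypotheses give `M₁ U = V M₂` and `N₁ U = V N₂`, hence `C₁ V = V C₂` for `Cᵢ = Nᵢ Mᵢ⁻¹`.
An eigenvalue `r` of `Cᵢ` is exactly a generalized eigenvalue `(r a - c : r b - d)` of the `i`-th
pencil, so `C₁` and `C₂` have disjoint spectra. Then `χ_{C₂}(C₁)` is invertible by the spectral
mapping theorem while `χ_{C₂}(C₁) V = V χ_{C₂}(C₂) = 0`, so `V = 0` and `U = M₁⁻¹ V M₂ = 0`.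
-/

namespace Matrix

variable {m n : Type*} [Fintype m] [Fintype n]

section CommRing

open Polynomial

variable {R : Type*} [CommRing R]

theorem pencil_mul_eq_mul_pencil {A₁ B₁ : Matrix m m R} {A₂ B₂ : Matrix n n R}
    {U V : Matrix m n R} (hA : A₁ * U = V * A₂) (hB : B₁ * U = V * B₂) (a b : R) :
    (b • A₁ - a • B₁) * U = V * (b • A₂ - a • B₂) := by
  rw [Matrix.sub_mul, Matrix.mul_sub, Matrix.smul_mul, Matrix.smul_mul, Matrix.mul_smul,
    Matrix.mul_smul, hA, hB]

variable [DecidableEq m] [DecidableEq n]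

theorem pow_mul_eq_mul_pow {C₁ : Matrix m m R} {C₂ : Matrix n n R} {V : Matrix m n R}
    (h : C₁ * V = V * C₂) (k : ℕ) : C₁ ^ k * V = V * C₂ ^ k := by
  induction k with
  | zero => rw [pow_zero, pow_zero, Matrix.one_mul, Matrix.mul_one]
  | succ k ih =>
    rw [pow_succ, pow_succ, Matrix.mul_assoc, h, ← Matrix.mul_assoc, ih, Matrix.mul_assoc]

theorem aeval_mul_eq_mul_aeval {C₁ : Matrix m m R} {C₂ : Matrix n n R} {V : Matrix m n R}
    (h : C₁ * V = V * C₂) (q : R[X]) : aeval C₁ q * V = V * aeval C₂ q := by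
  simp only [aeval_eq_sum_range, Matrix.sum_mul, Matrix.mul_sum, Matrix.smul_mul,
    Matrix.mul_smul, pow_mul_eq_mul_pow h]

theorem mul_inv_mul_eq_mul_mul_inv {M₁ N₁ : Matrix m m R} {M₂ N₂ : Matrix n n R}
    {U V : Matrix m n R} (hM₁ : IsUnit M₁.det) (hM₂ : IsUnit M₂.det)
    (hM : M₁ * U = V * M₂) (hN : N₁ * U = V * N₂) :
    N₁ * M₁⁻¹ * V = V * (N₂ * M₂⁻¹) := by
  have hV : M₁⁻¹ * V = U * M₂⁻¹ := by
    rw [← nonsing_inv_mul_cancel_left M₁ U hM₁, hM, ← Matrix.mul_assoc,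
      mul_nonsing_inv_cancel_right M₂ _ hM₂]
  rw [Matrix.mul_assoc, hV, ← Matrix.mul_assoc, hN, Matrix.mul_assoc]

end CommRing

variable [DecidableEq m] [DecidableEq n] {K : Type*} [Field K]

section Spectrum

open Polynomial

theorem mem_spectrum_mul_inv_iff {M N : Matrix m m K} (hM : IsUnit M.det) (r : K) :
    r ∈ spectrum K (N * M⁻¹) ↔ (r • M - N).det = 0 := by
  have : algebraMap K (Matrix m m K) r - N * M⁻¹ = (r • M - N) * M⁻¹ := by
    rw [Matrix.sub_mul, Matrix.smul_mul, mul_nonsing_inv M hM, Algebra.algebraMap_eq_smul_one]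
  rw [spectrum.mem_iff, this, isUnit_iff_isUnit_det, det_mul,
    IsUnit.mul_iff, and_iff_left (isUnit_nonsing_inv_det M hM), isUnit_iff_ne_zero, not_not]

theorem disjoint_spectrum_pencil_mul_inv {A₁ B₁ : Matrix m m K} {A₂ B₂ : Matrix n n K}
    (hdisj : ∀ a b : K, ¬(a = 0 ∧ b = 0) →
      ¬((b • A₁ - a • B₁).det = 0 ∧ (b • A₂ - a • B₂).det = 0))
    {a b c d : K} (hcd : b * c - a * d ≠ 0) (hM₁ : IsUnit (b • A₁ - a • B₁).det)
    (hM₂ : IsUnit (b • A₂ - a • B₂).det) :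
    Disjoint (spectrum K ((d • A₁ - c • B₁) * (b • A₁ - a • B₁)⁻¹))
      (spectrum K ((d • A₂ - c • B₂) * (b • A₂ - a • B₂)⁻¹)) := by
  refine Set.disjoint_left.2 fun r hr₁ hr₂ => ?_
  rw [mem_spectrum_mul_inv_iff hM₁] at hr₁
  rw [mem_spectrum_mul_inv_iff hM₂] at hr₂
  refine hdisj (r * a - c) (r * b - d) (fun ⟨hc, hd⟩ => hcd ?_) ⟨?_, ?_⟩
  · linear_combination -b * hc + a * hd
  · rw [← hr₁]; congr 1; module
  · rw [← hr₂]; congr 1; module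

theorem eq_zero_of_mul_eq_mul_of_disjoint_spectrum [IsAlgClosed K] {C₁ : Matrix m m K}
    {C₂ : Matrix n n K} {V : Matrix m n K} (h : C₁ * V = V * C₂)
    (hdisj : Disjoint (spectrum K C₁) (spectrum K C₂)) : V = 0 := by
  cases isEmpty_or_nonempty n
  · exact Subsingleton.elim _ _
  have hunit : IsUnit (aeval C₁ C₂.charpoly).det := by
    rw [← isUnit_iff_isUnit_det, ← spectrum.zero_notMem_iff K,
      spectrum.map_polynomial_aeval_of_degree_pos _ _
        (by rw [charpoly_degree_eq_dim]; exact_mod_cast Fintype.card_pos)]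
    rintro ⟨r, hr₁, hr₂⟩
    exact Set.disjoint_left.1 hdisj hr₁ (mem_spectrum_iff_isRoot_charpoly.2 hr₂)
  have hV := aeval_mul_eq_mul_aeval h C₂.charpoly
  rw [aeval_self_charpoly, Matrix.mul_zero] at hV
  rw [← nonsing_inv_mul_cancel_left _ V hunit, hV, Matrix.mul_zero]

end Spectrum

section PencilDet

open MvPolynomial

/-- `det (y • A - x • B)` as a binary form in `x = X 0`, `y = X 1`. -/
noncomputable def pencilDet (A B : Matrix m m K) : MvPolynomial (Fin 2) K :=
  det ((X 1 : MvPolynomial (Fin 2) K) • A.map C - (X 0 : MvPolynomial (Fin 2) K) • B.map C)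

theorem eval_pencilDet (A B : Matrix m m K) (x : Fin 2 → K) :
    eval x (pencilDet A B) = (x 1 • A - x 0 • B).det := by
  rw [pencilDet, RingHom.map_det]
  congr 1
  ext i j
  simp

theorem pencilDet_ne_zero {A B : Matrix m m K} (h : ∃ a b : K, (b • A - a • B).det ≠ 0) :
    pencilDet A B ≠ 0 := by
  obtain ⟨a, b, hab⟩ := h
  intro h0
  exact hab (by simpa [h0] using (eval_pencilDet A B ![a, b]).symm)

theorem exists_det_smul_sub_smul_ne_zero_and_ne_zero [Infinite K] {A₁ B₁ : Matrix m m K}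
    {A₂ B₂ : Matrix n n K} (h₁ : ∃ a b : K, (b • A₁ - a • B₁).det ≠ 0)
    (h₂ : ∃ a b : K, (b • A₂ - a • B₂).det ≠ 0) :
    ∃ a b : K, (b • A₁ - a • B₁).det ≠ 0 ∧ (b • A₂ - a • B₂).det ≠ 0 := by
  obtain ⟨x, hx⟩ : ∃ x, eval x (pencilDet A₁ B₁ * pencilDet A₂ B₂) ≠ 0 := by
    by_contra! h
    exact mul_ne_zero (pencilDet_ne_zero h₁) (pencilDet_ne_zero h₂)
      (funext fun x => by rw [h x, map_zero])
  rw [map_mul, eval_pencilDet, eval_pencilDet] at hx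
  exact ⟨x 0, x 1, left_ne_zero_of_mul hx, right_ne_zero_of_mul hx⟩

end PencilDet

end Matrix

theorem exists_mul_sub_mul_ne_zero {R : Type*} [CommRing R] {a b : R} (h : ¬(a = 0 ∧ b = 0)) :
    ∃ c d : R, b * c - a * d ≠ 0 := by
  by_cases hb : b = 0
  · exact ⟨0, -1, by simpa [hb] using h⟩
  · exact ⟨1, 0, by simpa using hb⟩

open Matrix

/-- Suppose `A₁ − λ B₁ ∈ ℂ^{n₁×n₁}` and `A₂ − λ B₂ ∈ ℂ^{n₂×n₂}` are regular matrix
pencils with disjoint spectra (no common generalized eigenvalue, infinity included):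
for every homogeneous pair `(a, b) ≠ (0, 0)`, `b • A₁ − a • B₁` and `b • A₂ − a • B₂`
are not both singular. Then the only matrices `U, V ∈ ℂ^{n₁×n₂}` satisfying
`A₁ U = V A₂` and `B₁ U = V B₂` are `U = V = 0`. -/
theorem pencil_disjoint_spectra_zero {n₁ n₂ : ℕ}
    (A₁ B₁ : Matrix (Fin n₁) (Fin n₁) ℂ) (A₂ B₂ : Matrix (Fin n₂) (Fin n₂) ℂ)
    (hreg₁ : ∃ a b : ℂ, (b • A₁ - a • B₁).det ≠ 0)
    (hreg₂ : ∃ a b : ℂ, (b • A₂ - a • B₂).det ≠ 0)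
    (hdisj : ∀ a b : ℂ, ¬(a = 0 ∧ b = 0) →
      ¬((b • A₁ - a • B₁).det = 0 ∧ (b • A₂ - a • B₂).det = 0))
    (U V : Matrix (Fin n₁) (Fin n₂) ℂ)
    (h1 : A₁ * U = V * A₂) (h2 : B₁ * U = V * B₂) : U = 0 ∧ V = 0 := by
  cases isEmpty_or_nonempty (Fin n₁)
  · exact ⟨Subsingleton.elim _ _, Subsingleton.elim _ _⟩
  obtain ⟨a, b, hM₁, hM₂⟩ := exists_det_smul_sub_smul_ne_zero_and_ne_zero hreg₁ hreg₂
  have hab : ¬(a = 0 ∧ b = 0) := by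
    rintro ⟨rfl, rfl⟩
    simp at hM₁
  obtain ⟨c, d, hcd⟩ := exists_mul_sub_mul_ne_zero hab
  rw [← isUnit_iff_ne_zero] at hM₁ hM₂
  have hMU := pencil_mul_eq_mul_pencil h1 h2 a b
  have hV : V = 0 := eq_zero_of_mul_eq_mul_of_disjoint_spectrum
    (mul_inv_mul_eq_mul_mul_inv hM₁ hM₂ hMU (pencil_mul_eq_mul_pencil h1 h2 c d))
    (disjoint_spectrum_pencil_mul_inv hdisj hcd hM₁ hM₂)
  refine ⟨?_, hV⟩
  rw [hV, Matrix.zero_mul] at hMU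
  rw [← nonsing_inv_mul_cancel_left _ U hM₁, hMU, Matrix.mul_zero]
end

section
/- If X ∈ ℝ^{n×n} satisfies X = A Xᵀ B + C, then the matrices M = [[BAᵀ, 0], [−CAᵀ, I]] and L = [[I, 0], [ACᵀ, ABᵀ]] satisfy M·[[I],[XAᵀ]] = [[I],[AXᵀ]]·(BAᵀ) and L·[[I],[XAᵀ]] = [[I],[AXᵀ]]. -/
/-! Both identities are block multiplications whose top rows are trivial. The bottom row for `M`
is the equation `X - C = A Xᵀ B` multiplied on the right by `Aᵀ`; the bottom row for `L` is its
transpose `Xᵀ = Bᵀ X Aᵀ + Cᵀ` multiplied on the left by `A`. -/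

open Matrix

variable {R : Type*} {m n : Type*} [Fintype m] [Fintype n]

theorem transpose_eq_of_eq_mul_transpose_mul_add [CommRing R] {A B C X : Matrix m n R}
    (hX : X = A * Xᵀ * B + C) : Xᵀ = Bᵀ * X * Aᵀ + Cᵀ := by
  conv_lhs => rw [hX]
  simp only [transpose_add, transpose_mul, transpose_transpose, Matrix.mul_assoc]

theorem tstein_M_mul_fromRows [Ring R] [DecidableEq m] {A B C X : Matrix m n R}
    (hX : X = A * Xᵀ * B + C) :
    fromBlocks (B * Aᵀ) 0 (-(C * Aᵀ)) (1 : Matrix m m R) * fromRows (1 : Matrix m m R) (X * Aᵀ) =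
      fromRows (1 : Matrix m m R) (A * Xᵀ) * (B * Aᵀ) := by
  rw [fromBlocks_mul_fromRows, fromRows_mul, fromRows_ext_iff]
  constructor
  · simp
  · calc -(C * Aᵀ) * 1 + 1 * (X * Aᵀ) = (X - C) * Aᵀ := by
          rw [Matrix.mul_one, Matrix.one_mul, Matrix.sub_mul, neg_add_eq_sub]
      _ = A * Xᵀ * (B * Aᵀ) := by
          rw [sub_eq_of_eq_add hX, Matrix.mul_assoc]

theorem tstein_L_mul_fromRows [CommRing R] [DecidableEq m] {A B C X : Matrix m n R}
    (hX : X = A * Xᵀ * B + C) :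
    fromBlocks 1 0 (A * Cᵀ) (A * Bᵀ) * fromRows (1 : Matrix m m R) (X * Aᵀ) =
      fromRows (1 : Matrix m m R) (A * Xᵀ) := by
  rw [fromBlocks_mul_fromRows, fromRows_ext_iff]
  constructor
  · simp
  · rw [transpose_eq_of_eq_mul_transpose_mul_add hX, Matrix.mul_add, add_comm]
    simp only [Matrix.mul_assoc, Matrix.mul_one]

/-- If `X` solves `X = A Xᵀ B + C`, then with `M = [[BAᵀ, 0], [−CAᵀ, I]]` and
`L = [[I, 0], [ACᵀ, ABᵀ]]`, the stacked matrix `[[I],[XAᵀ]]` satisfies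
`M [[I],[XAᵀ]] = [[I],[AXᵀ]] (BAᵀ)` and `L [[I],[XAᵀ]] = [[I],[AXᵀ]]`. -/
theorem tstein_deflating {n : ℕ} (A B C X : Matrix (Fin n) (Fin n) ℝ)
    (hX : X = A * Xᵀ * B + C) :
    fromBlocks (B * Aᵀ) 0 (-(C * Aᵀ)) (1 : Matrix (Fin n) (Fin n) ℝ) * fromRows (1 : Matrix (Fin n) (Fin n) ℝ) (X * Aᵀ) =
        fromRows (1 : Matrix (Fin n) (Fin n) ℝ) (A * Xᵀ) * (B * Aᵀ) ∧
      fromBlocks 1 0 (A * Cᵀ) (A * Bᵀ) * fromRows (1 : Matrix (Fin n) (Fin n) ℝ) (X * Aᵀ) =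
        fromRows (1 : Matrix (Fin n) (Fin n) ℝ) (A * Xᵀ) :=
  ⟨tstein_M_mul_fromRows hX, tstein_L_mul_fromRows hX⟩
end

section
/- If X ∈ ℝ^{n×n} satisfies X = A Xᵀ B + C, then with M, L as above, [−AXᵀ, I]·M = [−XAᵀ, I] and [−AXᵀ, I]·L = ABᵀ·[−XAᵀ, I]. -/
open Matrix

namespace Matrix

variable {p q R : Type*} [Fintype p] [Fintype q]

theorem transpose_eq_of_stein [CommRing R] {A B C X : Matrix p q R}
    (hX : X = A * Xᵀ * B + C) : Xᵀ = Bᵀ * X * Aᵀ + Cᵀ := by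
  conv_lhs => rw [hX]
  simp only [transpose_add, transpose_mul, transpose_transpose, Matrix.mul_assoc]

variable [DecidableEq p] [Ring R]

theorem fromCols_neg_one_mul_fromBlocks_of_stein {A B C X : Matrix p q R}
    (hX : X = A * Xᵀ * B + C) :
    fromCols (-(A * Xᵀ)) (1 : Matrix p p R) * fromBlocks (B * Aᵀ) 0 (-(C * Aᵀ)) 1 =
      fromCols (-(X * Aᵀ)) (1 : Matrix p p R) := by
  rw [fromCols_mul_fromBlocks]
  congr 1
  · conv_rhs => rw [hX]
    simp only [Matrix.add_mul, Matrix.mul_assoc, Matrix.neg_mul, Matrix.one_mul, neg_add]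
  · simp

theorem fromCols_neg_one_mul_fromBlocks_of_transpose_stein {A B C X : Matrix p q R}
    (hXt : Xᵀ = Bᵀ * X * Aᵀ + Cᵀ) :
    fromCols (-(A * Xᵀ)) (1 : Matrix p p R) * fromBlocks (1 : Matrix p p R) 0 (A * Cᵀ) (A * Bᵀ) =
      (A * Bᵀ) * fromCols (-(X * Aᵀ)) (1 : Matrix p p R) := by
  rw [fromCols_mul_fromBlocks, mul_fromCols]
  congr 1
  · rw [hXt]
    simp only [Matrix.mul_add, Matrix.mul_assoc, Matrix.mul_neg, Matrix.mul_one, Matrix.one_mul]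
    abel
  · simp

end Matrix

/-- If `X` solves `X = A Xᵀ B + C`, then with `M = [[BAᵀ, 0], [−CAᵀ, I]]` and
`L = [[I, 0], [ACᵀ, ABᵀ]]`, the row block matrix `[−AXᵀ, I]` satisfies
`[−AXᵀ, I] M = [−XAᵀ, I]` and `[−AXᵀ, I] L = ABᵀ [−XAᵀ, I]`. -/
theorem tstein_deflating_dual {n : ℕ} (A B C X : Matrix (Fin n) (Fin n) ℝ)
    (hX : X = A * Xᵀ * B + C) :
    fromCols (-(A * Xᵀ)) (1 : Matrix (Fin n) (Fin n) ℝ) * fromBlocks (B * Aᵀ) 0 (-(C * Aᵀ)) 1 =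
        fromCols (-(X * Aᵀ)) (1 : Matrix (Fin n) (Fin n) ℝ) ∧
      fromCols (-(A * Xᵀ)) (1 : Matrix (Fin n) (Fin n) ℝ) * fromBlocks 1 0 (A * Cᵀ) (A * Bᵀ) =
        (A * Bᵀ) * fromCols (-(X * Aᵀ)) (1 : Matrix (Fin n) (Fin n) ℝ) :=
  ⟨fromCols_neg_one_mul_fromBlocks_of_stein hX,
    fromCols_neg_one_mul_fromBlocks_of_transpose_stein (transpose_eq_of_stein hX)⟩
end

section
/- Suppose the set σ(ABᵀ) is ⊤-reciprocal free (i.e., λμ ≠ 1 for all λ, μ ∈ σ(ABᵀ)). If X₁, X₂ ∈ ℝ^{n×n} satisfy ACᵀ + ABᵀX₁ = X₂ and ACᵀ + ABᵀX₂ᵀ = X₁ᵀ, then X₁ = X₂ᵀ. -/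
/-!
Put `Z = X₁ - X₂ᵀ` and `M = A Bᵀ`. Subtracting the two equations gives `Zᵀ = -M Z`, hence the
Stein equation `Z = M Z Mᵀ`, and by iteration `M ^ k Z (Mᵀ) ^ k = Z`. For the reversed
characteristic polynomial `q` of `Mᵀ` this yields `q(M) Z = M ^ n Z χ(Mᵀ) = 0` by Cayley–Hamilton.
The eigenvalues of `q(M)` are `q(λ) = λ ^ n χ(λ⁻¹)` for `λ ∈ σ(M)` (and `1` at `λ = 0`); they are
nonzero because `σ(Mᵀ) = σ(M)` is ⊤-reciprocal free, so `q(M)` is invertible and `Z = 0`.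
-/

open Matrix Polynomial

theorem Polynomial.Monic.eval_reverse_ne_zero {K : Type*} [Field K] {q : K[X]} (hq : q.Monic)
    {x : K} (hx : ∀ y, q.IsRoot y → x * y ≠ 1) : q.reverse.eval x ≠ 0 := by
  rcases eq_or_ne x 0 with rfl | hx0
  · rw [← coeff_zero_eq_eval_zero, coeff_zero_reverse, hq.leadingCoeff]
    exact one_ne_zero
  · let _ : Invertible x⁻¹ := invertibleOfNonzero (inv_ne_zero hx0)
    intro h0
    refine hx x⁻¹ ?_ (mul_inv_cancel₀ hx0)
    rw [IsRoot.def, eval, ← eval₂_reverse_eq_zero_iff, invOf_eq_inv, inv_inv]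
    exact h0

namespace Matrix

theorem eq_mul_mul_transpose_of_transpose_eq_neg_mul {R m : Type*} [CommRing R] [Fintype m]
    {M Z : Matrix m m R} (h : Zᵀ = -(M * Z)) : Z = M * Z * Mᵀ := by
  have := congrArg transpose h
  rwa [transpose_transpose, transpose_neg, transpose_mul, h, neg_mul, neg_neg] at this

section CommRing

variable {R : Type*} [CommRing R] {m p : Type*} [Fintype m] [DecidableEq m] [Fintype p]
  [DecidableEq p]

theorem spectrum_transpose_s13 (M : Matrix m m R) : spectrum R Mᵀ = spectrum R M := by
  ext r
  simp only [mem_spectrum_iff_not_isUnit_eval_charpoly, charpoly_transpose]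

variable {M : Matrix m m R} {N : Matrix p p R} {Z : Matrix m p R}

theorem pow_mul_mul_pow_eq_of_eq_mul_mul (h : Z = M * Z * N) (k : ℕ) :
    M ^ k * Z * N ^ k = Z := by
  induction k with
  | zero => simp
  | succ k ih =>
    calc M ^ (k + 1) * Z * N ^ (k + 1) = M ^ k * (M * Z * N) * N ^ k := by
          simp only [pow_succ M, pow_succ' N, Matrix.mul_assoc]
      _ = Z := by rw [← h, ih]

theorem aeval_reflect_mul_eq_of_eq_mul_mul (h : Z = M * Z * N) {d : ℕ} (q : R[X])
    (hq : q.natDegree ≤ d) : aeval M (reflect d q) * Z = M ^ d * Z * aeval N q := by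
  refine induction_with_natDegree_le
    (fun q => aeval M (reflect d q) * Z = M ^ d * Z * aeval N q) d ?_ ?_ ?_ q hq
  · simp
  · intro k r _ hk
    calc aeval M (reflect d (C r * X ^ k)) * Z = r • (M ^ (d - k) * Z) := by
          rw [reflect_C_mul_X_pow, revAt_le hk, map_mul, aeval_C, aeval_X_pow, ← Algebra.smul_def,
            Matrix.smul_mul]
      _ = r • (M ^ (d - k) * (M ^ k * Z * N ^ k)) := by
          rw [pow_mul_mul_pow_eq_of_eq_mul_mul h k]
      _ = M ^ d * Z * aeval N (C r * X ^ k) := by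
          rw [map_mul, aeval_C, aeval_X_pow, ← Algebra.smul_def, Matrix.mul_smul,
            ← Matrix.mul_assoc, ← Matrix.mul_assoc, ← pow_add, Nat.sub_add_cancel hk]
  · intro f g _ _ hf hg
    rw [reflect_add, map_add, map_add, Matrix.add_mul, hf, hg, Matrix.mul_add]

theorem aeval_reverse_charpoly_mul_eq_zero_of_eq_mul_mul (h : Z = M * Z * N) :
    aeval M N.charpoly.reverse * Z = 0 := by
  rw [reverse, aeval_reflect_mul_eq_of_eq_mul_mul h _ le_rfl, aeval_self_charpoly, Matrix.mul_zero]

end CommRing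

variable {K : Type*} [Field K] [IsAlgClosed K] {m p : Type*} [Fintype m] [DecidableEq m]
  [Fintype p] [DecidableEq p]

theorem eq_zero_of_eq_mul_mul {M : Matrix m m K} {N : Matrix p p K} {Z : Matrix m p K}
    (hMN : ∀ lam ∈ spectrum K M, ∀ mu ∈ spectrum K N, lam * mu ≠ 1) (h : Z = M * Z * N) :
    Z = 0 := by
  cases isEmpty_or_nonempty m
  · exact Subsingleton.elim _ _
  set U := aeval M N.charpoly.reverse
  have hU : IsUnit U.det := by
    rw [← isUnit_iff_isUnit_det, ← spectrum.zero_notMem_iff K,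
      spectrum.map_polynomial_aeval_of_nonempty _ _
        (spectrum.nonempty_of_isAlgClosed_of_finiteDimensional K M)]
    rintro ⟨lam, hlam, hzero⟩
    refine (charpoly_monic N).eval_reverse_ne_zero (fun mu hmu => ?_) hzero
    exact hMN lam hlam mu (mem_spectrum_iff_isRoot_charpoly.mpr hmu)
  calc Z = U⁻¹ * (U * Z) := (nonsing_inv_mul_cancel_left U Z hU).symm
    _ = 0 := by rw [aeval_reverse_charpoly_mul_eq_zero_of_eq_mul_mul h, Matrix.mul_zero]

end Matrix

/-- Suppose the spectrum of `A Bᵀ` (over `ℂ`) is ⊤-reciprocal free, i.e.,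
`λ μ ≠ 1` for all eigenvalues `λ, μ` of `A Bᵀ`. If `X₁, X₂ ∈ ℝ^{n×n}` satisfy
`A Cᵀ + A Bᵀ X₁ = X₂` and `A Cᵀ + A Bᵀ X₂ᵀ = X₁ᵀ`, then `X₁ = X₂ᵀ`. -/
theorem tstein_X1_eq_X2transpose {n : ℕ} (A B C : Matrix (Fin n) (Fin n) ℝ)
    (hfree : ∀ lam mu : ℂ, lam ∈ spectrum ℂ ((A * Bᵀ).map (algebraMap ℝ ℂ)) →
      mu ∈ spectrum ℂ ((A * Bᵀ).map (algebraMap ℝ ℂ)) → lam * mu ≠ 1)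
    (X₁ X₂ : Matrix (Fin n) (Fin n) ℝ)
    (h1 : A * Cᵀ + A * Bᵀ * X₁ = X₂)
    (h2 : A * Cᵀ + A * Bᵀ * X₂ᵀ = X₁ᵀ) : X₁ = X₂ᵀ := by
  set M := A * Bᵀ
  rw [← eq_sub_iff_add_eq'] at h1 h2
  have hskew : (X₁ - X₂ᵀ)ᵀ = -(M * (X₁ - X₂ᵀ)) := by
    rw [transpose_sub, transpose_transpose, mul_sub, h1, h2]
    abel
  have hstein := congrArg (map · (algebraMap ℝ ℂ))
    (eq_mul_mul_transpose_of_transpose_eq_neg_mul hskew)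
  simp only [Matrix.map_mul, transpose_map] at hstein
  rw [← sub_eq_zero, ← (map_injective (algebraMap ℝ ℂ).injective).eq_iff,
    Matrix.map_zero _ (map_zero _)]
  refine eq_zero_of_eq_mul_mul (fun lam hlam mu hmu => hfree lam mu hlam ?_) hstein
  rwa [spectrum_transpose_s13] at hmu
end

section
/- If X solves X = A Xᵀ B + C, then with M₁ = [[AᵀB, 0], [−C − ACᵀB, I]] and L₁ = [[I, 0], [0, ABᵀ]], one has M₁·[[I],[X]] = L₁·[[I],[X]]·(AᵀB). -/
open Matrix

/-
Transposing the ⊤-Stein equation `X = A Xᵀ B + C` and substituting the result back into it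
yields the ordinary Stein equation `X = (A Bᵀ) X (Aᵀ B) + (A Cᵀ B + C)`. For any Stein equation
`X = Q X P + D`, the graph `[[I],[X]]` of a solution spans a deflating subspace of the pencil
`[[P, 0], [-D, I]] - λ [[I, 0], [0, Q]]`, which is the claimed identity.
-/

namespace Matrix

variable {m α : Type*} [Fintype m] [CommRing α]

theorem transpose_eq_of_eq_mul_transpose_mul_add {A B C X : Matrix m m α}
    (hX : X = A * Xᵀ * B + C) : Xᵀ = Bᵀ * X * Aᵀ + Cᵀ := by
  conv_lhs => rw [hX]
  simp only [transpose_add, transpose_mul, transpose_transpose, Matrix.mul_assoc]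

theorem stein_of_eq_mul_transpose_mul_add {A B C X : Matrix m m α}
    (hX : X = A * Xᵀ * B + C) : X = A * Bᵀ * X * (Aᵀ * B) + (A * Cᵀ * B + C) := by
  calc X = A * Xᵀ * B + C := hX
    _ = A * (Bᵀ * X * Aᵀ + Cᵀ) * B + C := by rw [transpose_eq_of_eq_mul_transpose_mul_add hX]
    _ = A * Bᵀ * X * (Aᵀ * B) + (A * Cᵀ * B + C) := by noncomm_ring

theorem fromBlocks_mul_fromRows_one_eq_of_stein [DecidableEq m]
    {P Q D X : Matrix m m α} (hX : X = Q * X * P + D) :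
    fromBlocks P 0 (-D) (1 : Matrix m m α) * fromRows (1 : Matrix m m α) X =
      fromBlocks (1 : Matrix m m α) 0 0 Q * fromRows (1 : Matrix m m α) X * P := by
  have hDX : -D + X = Q * X * P := by rw [neg_add_eq_iff_eq_add, add_comm]; exact hX
  rw [fromBlocks_mul_fromRows, fromBlocks_mul_fromRows, fromRows_mul]
  simp only [Matrix.zero_mul, Matrix.one_mul, Matrix.mul_one, add_zero, zero_add, Matrix.mul_assoc,
    hDX]

end Matrix

/-- If `X` solves `X = A Xᵀ B + C`, then with `M₁ = [[AᵀB, 0], [−C − ACᵀB, I]]`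
and `L₁ = [[I, 0], [0, ABᵀ]]`, one has `M₁ [[I],[X]] = L₁ [[I],[X]] (AᵀB)`. -/
theorem tstein_deflating_alt {n : ℕ} (A B C X : Matrix (Fin n) (Fin n) ℝ)
    (hX : X = A * Xᵀ * B + C) :
    fromBlocks (Aᵀ * B) 0 (-(C + A * Cᵀ * B)) (1 : Matrix (Fin n) (Fin n) ℝ) * fromRows (1 : Matrix (Fin n) (Fin n) ℝ) X =
      fromBlocks (1 : Matrix (Fin n) (Fin n) ℝ) 0 0 (A * Bᵀ) * fromRows (1 : Matrix (Fin n) (Fin n) ℝ) X * (Aᵀ * B) := by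
  refine fromBlocks_mul_fromRows_one_eq_of_stein ?_
  rw [add_comm C]
  exact stein_of_eq_mul_transpose_mul_add hX
end

section
/- Suppose ρ(ABᵀ)·ρ(AᵀB) < 1 where ρ is the spectral radius. Define C₀ = C + ACᵀB and C_k = C_{k−1} + (ABᵀ)^{2^{k−1}} C_{k−1} (AᵀB)^{2^{k−1}}. Then C_k = Σ_{i=0}^{2^k − 1} (ABᵀ)^i C₀ (AᵀB)^i, and C_k converges to the unique solution X of X = ABᵀ X AᵀB + C₀ as k → ∞. -/
/-!
Write `M = ABᵀ` and `N = AᵀB`. The doubling step adds the terms with indices `2ᵏ, …, 2ᵏ⁺¹ - 1`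
to the partial sum, so `C_k` is the `2ᵏ`-th partial sum of `∑ Mⁱ C₀ Nⁱ`. Gelfand's formula turns
`ρ(M)ρ(N) < 1` into geometric decay of `‖Mᵏ‖‖Nᵏ‖`, so the series converges; shifting the index
shows that its sum solves the equation, and the difference `Z` of two solutions satisfies
`Z = Mᵏ Z Nᵏ` for all `k`, whose right-hand side tends to `0`.
-/

open Matrix Filter

open scoped NNReal ENNReal Topology

theorem NNReal.summable_of_tendsto_rpow_one_div_lt_one {u : ℕ → ℝ≥0} {ρ : ℝ≥0∞}
    (hu : Tendsto (fun k : ℕ => (u k : ℝ≥0∞) ^ (1 / k : ℝ)) atTop (𝓝 ρ)) (hρ : ρ < 1) :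
    Summable u := by
  obtain ⟨r, hρr, hr1⟩ := exists_between hρ
  lift r to ℝ≥0 using (hr1.trans ENNReal.one_lt_top).ne
  have hbound : ∀ᶠ k in atTop, ‖(u k : ℝ)‖ ≤ (r : ℝ) ^ k := by
    filter_upwards [hu.eventually_lt_const hρr, eventually_ge_atTop 1] with k hk hk1
    have hk' := ENNReal.rpow_lt_rpow hk (by positivity : (0 : ℝ) < k)
    rw [← ENNReal.rpow_mul, one_div_mul_cancel (by positivity), ENNReal.rpow_one,
      ENNReal.rpow_natCast, ← ENNReal.coe_pow, ENNReal.coe_lt_coe] at hk'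
    rw [Real.norm_of_nonneg (u k).coe_nonneg]
    exact_mod_cast hk'.le
  exact NNReal.summable_coe.1 <| .of_norm_bounded_eventually_nat
    (NNReal.summable_coe.2 (NNReal.summable_geometric (mod_cast hr1))) (by simpa using hbound)

theorem spectrum.spectralRadius_ne_top {A : Type*} [NormedRing A] [NormedAlgebra ℂ A]
    [CompleteSpace A] (a : A) : spectralRadius ℂ a ≠ ∞ := by
  refine ne_top_of_le_ne_top ?_ (spectrum.spectralRadius_le_pow_nnnorm_pow_one_div ℂ a 0)
  exact ENNReal.mul_ne_top (ENNReal.rpow_ne_top_of_nonneg (by norm_num) ENNReal.coe_ne_top)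
    (ENNReal.rpow_ne_top_of_nonneg (by norm_num) ENNReal.coe_ne_top)

theorem summable_norm_pow_mul_norm_pow_of_spectralRadius {A : Type*} [NormedRing A]
    [NormedAlgebra ℂ A] [CompleteSpace A] {a b : A}
    (h : spectralRadius ℂ a * spectralRadius ℂ b < 1) :
    Summable fun k : ℕ => ‖a ^ k‖ * ‖b ^ k‖ := by
  have hprod := ENNReal.Tendsto.mul
    (spectrum.pow_nnnorm_pow_one_div_tendsto_nhds_spectralRadius a)
    (Or.inr (spectrum.spectralRadius_ne_top b))
    (spectrum.pow_nnnorm_pow_one_div_tendsto_nhds_spectralRadius b)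
    (Or.inr (spectrum.spectralRadius_ne_top a))
  have hs := NNReal.summable_of_tendsto_rpow_one_div_lt_one
    (u := fun k => ‖a ^ k‖₊ * ‖b ^ k‖₊) (hprod.congr fun k => by
      rw [ENNReal.coe_mul, ENNReal.mul_rpow_of_nonneg _ _ (by positivity)]) h
  simpa using NNReal.summable_coe.2 hs

section Stein

variable {R : Type*}

theorem eq_sum_pow_mul_mul_pow_of_doubling [Semiring R] {a b d : R} {c : ℕ → R} (h0 : c 0 = d)
    (hrec : ∀ k, c (k + 1) = c k + a ^ 2 ^ k * c k * b ^ 2 ^ k) (k : ℕ) :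
    c k = ∑ i ∈ Finset.range (2 ^ k), a ^ i * d * b ^ i := by
  induction k with
  | zero => simpa using h0
  | succ k ih =>
    rw [hrec, ih, pow_succ, mul_two, Finset.sum_range_add, Finset.mul_sum, Finset.sum_mul]
    congr 1
    refine Finset.sum_congr rfl fun i _ => ?_
    rw [pow_add, add_comm, pow_add]
    simp only [mul_assoc]

theorem HasSum.eq_mul_mul_add [Ring R] [TopologicalSpace R] [IsTopologicalRing R] [T2Space R]
    {a b d x : R} (h : HasSum (fun k : ℕ => a ^ k * d * b ^ k) x) : x = a * x * b + d := by
  have hshift : HasSum (fun k : ℕ => a ^ (k + 1) * d * b ^ (k + 1)) (a * x * b) := by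
    have hterm (k : ℕ) : a * (a ^ k * d * b ^ k) * b = a ^ (k + 1) * d * b ^ (k + 1) := by
      rw [pow_succ' a, pow_succ b]
      simp only [mul_assoc]
    simpa only [hterm] using (h.mul_left a).mul_right b
  have htail : HasSum (fun k : ℕ => a ^ (k + 1) * d * b ^ (k + 1)) (x - d) := by
    simpa using (hasSum_nat_add_iff' 1).mpr h
  exact sub_eq_iff_eq_add.1 (htail.unique hshift)

theorem eq_zero_of_summable_pow_mul_mul_pow [Ring R] [TopologicalSpace R] [IsTopologicalRing R]
    [T2Space R] {a b z : R} (hs : Summable fun k : ℕ => a ^ k * z * b ^ k) (hz : z = a * z * b) :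
    z = 0 := by
  have hconst : ∀ k : ℕ, a ^ k * z * b ^ k = z := by
    intro k
    induction k with
    | zero => simp
    | succ k ih =>
      calc a ^ (k + 1) * z * b ^ (k + 1) = a ^ k * (a * z * b) * b ^ k := by
            rw [pow_succ a, pow_succ' b]
            simp only [mul_assoc]
        _ = z := by rw [← hz, ih]
  simpa [hconst] using hs.tendsto_atTop_zero

theorem summable_pow_mul_mul_pow [NormedRing R] [CompleteSpace R] {a b : R}
    (h : Summable fun k : ℕ => ‖a ^ k‖ * ‖b ^ k‖) (d : R) :
    Summable fun k : ℕ => a ^ k * d * b ^ k := by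
  refine .of_norm_bounded (h.mul_right ‖d‖) fun k => ?_
  calc ‖a ^ k * d * b ^ k‖ ≤ ‖a ^ k‖ * ‖d‖ * ‖b ^ k‖ := norm_mul₃_le
    _ = ‖a ^ k‖ * ‖b ^ k‖ * ‖d‖ := by ring

end Stein

section Frobenius

-- The Frobenius norm is invariant under `ℝ → ℂ`, which carries Gelfand's formula over from the
-- complexification to the real matrices.

attribute [local instance] Matrix.frobeniusNormedAddCommGroup Matrix.frobeniusNormedRing
  Matrix.frobeniusNormedAlgebra

theorem Matrix.summable_pow_mul_mul_pow_of_spectralRadius {ι : Type*} [Fintype ι]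
    [DecidableEq ι] {M N : Matrix ι ι ℝ}
    (h : spectralRadius ℂ (M.map (algebraMap ℝ ℂ)) * spectralRadius ℂ (N.map (algebraMap ℝ ℂ)) < 1)
    (D : Matrix ι ι ℝ) : Summable fun k : ℕ => M ^ k * D * N ^ k := by
  have hnorm (P : Matrix ι ι ℝ) (k : ℕ) : ‖P.map (algebraMap ℝ ℂ) ^ k‖ = ‖P ^ k‖ := by
    rw [← Matrix.map_pow]
    exact frobenius_norm_map_eq _ _ fun x => by simp
  have hMN : Summable fun k : ℕ => ‖M ^ k‖ * ‖N ^ k‖ := by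
    simpa only [hnorm] using summable_norm_pow_mul_norm_pow_of_spectralRadius h
  exact summable_pow_mul_mul_pow hMN D

end Frobenius

/-- Smith iteration for the ⊤-Stein equation. Suppose `ρ(ABᵀ)·ρ(AᵀB) < 1`
(spectral radii over `ℂ`). Define `C₀ = C + A Cᵀ B` and
`C_k = C_{k−1} + (ABᵀ)^{2^{k−1}} C_{k−1} (AᵀB)^{2^{k−1}}`. Then
`C_k = Σ_{i=0}^{2^k − 1} (ABᵀ)^i C₀ (AᵀB)^i`, and `C_k` converges to the unique
solution `X` of `X = ABᵀ X AᵀB + C₀`. -/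
theorem smith_iteration {n : ℕ} (A B C : Matrix (Fin n) (Fin n) ℝ)
    (hρ : spectralRadius ℂ ((A * Bᵀ).map (algebraMap ℝ ℂ)) *
        spectralRadius ℂ ((Aᵀ * B).map (algebraMap ℝ ℂ)) < 1)
    (Cseq : ℕ → Matrix (Fin n) (Fin n) ℝ)
    (h0 : Cseq 0 = C + A * Cᵀ * B)
    (hrec : ∀ k : ℕ,
      Cseq (k + 1) = Cseq k + (A * Bᵀ) ^ 2 ^ k * Cseq k * (Aᵀ * B) ^ 2 ^ k) :
    (∀ k : ℕ, Cseq k =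
        ∑ i ∈ Finset.range (2 ^ k),
          (A * Bᵀ) ^ i * (C + A * Cᵀ * B) * (Aᵀ * B) ^ i) ∧
      (∃! X : Matrix (Fin n) (Fin n) ℝ,
          X = (A * Bᵀ) * X * (Aᵀ * B) + (C + A * Cᵀ * B)) ∧
      ∀ X : Matrix (Fin n) (Fin n) ℝ,
        X = (A * Bᵀ) * X * (Aᵀ * B) + (C + A * Cᵀ * B) →
          Tendsto Cseq atTop (nhds X) := by
  have hsum := Matrix.summable_pow_mul_mul_pow_of_spectralRadius hρ
  obtain ⟨X, hX⟩ := hsum (C + A * Cᵀ * B)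
  have hunique (Y : Matrix (Fin n) (Fin n) ℝ)
      (hY : Y = A * Bᵀ * Y * (Aᵀ * B) + (C + A * Cᵀ * B)) : Y = X := by
    refine sub_eq_zero.1 (eq_zero_of_summable_pow_mul_mul_pow (hsum (Y - X)) ?_)
    nth_rewrite 1 [hY, hX.eq_mul_mul_add]
    noncomm_ring
  have hCseq := eq_sum_pow_mul_mul_pow_of_doubling h0 hrec
  refine ⟨hCseq, ⟨X, hX.eq_mul_mul_add, hunique⟩, fun Y hY => ?_⟩
  rw [funext hCseq, hunique Y hY]
  exact hX.tendsto_sum_nat.comp (tendsto_pow_atTop_atTop_of_one_lt one_lt_two)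
end

section
/- Let S(X) = X − AXᵀB be invertible as a linear operator on ℝ^{n×n}, and suppose X solves S(X) = C and X + δX solves the perturbed equation (X+δX) = (A+δA)(X+δX)ᵀ(B+δB) + (C+δC). If ‖S⁻¹‖·Δ < 1 where Δ = ‖A‖_F‖δB‖_F + ‖δA‖_F(‖B‖_F + ‖δB‖_F), then ‖δX‖_F ≤ ‖S⁻¹‖·(‖δC‖_F + Δ·‖X‖_F) / (1 − ‖S⁻¹‖·Δ). -/
/-!
Subtracting `S(X) = C` from the perturbed equation leaves
`S(δX) = δC + A (X + δX)ᵀ δB + δA (X + δX)ᵀ (B + δB)`. Applying `S⁻¹` and submultiplicativity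
of the Frobenius norm gives `‖δX‖ ≤ ‖S⁻¹‖ (‖δC‖ + Δ (‖X‖ + ‖δX‖))`, an inequality that is linear
in `‖δX‖` and can be solved for it because `‖S⁻¹‖ Δ < 1`.
-/

open Matrix

attribute [local instance] Matrix.frobeniusNormedAddCommGroup Matrix.frobeniusNormedRing
  Matrix.frobeniusNormedSpace

lemma ContinuousLinearEquiv.norm_le_div_of_norm_apply_le {𝕜 E F : Type*}
    [NontriviallyNormedField 𝕜] [SeminormedAddCommGroup E] [SeminormedAddCommGroup F]
    [NormedSpace 𝕜 E] [NormedSpace 𝕜 F] (S : E ≃L[𝕜] F) {x : E} {c Δ a : ℝ}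
    (hsmall : ‖(S.symm : F →L[𝕜] E)‖ * Δ < 1) (hSx : ‖S x‖ ≤ c + Δ * (a + ‖x‖)) :
    ‖x‖ ≤ ‖(S.symm : F →L[𝕜] E)‖ * (c + Δ * a) / (1 - ‖(S.symm : F →L[𝕜] E)‖ * Δ) := by
  have hx : ‖x‖ ≤ ‖(S.symm : F →L[𝕜] E)‖ * (c + Δ * (a + ‖x‖)) :=
    calc ‖x‖ = ‖(S.symm : F →L[𝕜] E) (S x)‖ := by simp
      _ ≤ ‖(S.symm : F →L[𝕜] E)‖ * ‖S x‖ := ContinuousLinearMap.le_opNorm _ _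
      _ ≤ ‖(S.symm : F →L[𝕜] E)‖ * (c + Δ * (a + ‖x‖)) := by gcongr
  rw [le_div_iff₀ (sub_pos.mpr hsmall)]
  linarith

namespace Matrix

lemma sub_mul_transpose_mul_eq_of_perturbed {n R : Type*} [Fintype n] [DecidableEq n] [Ring R]
    {A B C X δA δB δC δX : Matrix n n R} (hX : X - A * Xᵀ * B = C)
    (hpert : X + δX = (A + δA) * (X + δX)ᵀ * (B + δB) + (C + δC)) :
    δX - A * δXᵀ * B = δC + A * (X + δX)ᵀ * δB + δA * (X + δX)ᵀ * (B + δB) := by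
  subst hX
  rw [transpose_add] at hpert ⊢
  linear_combination (norm := noncomm_ring) hpert

variable {l m n p 𝕜 : Type*} [Fintype l] [Fintype m] [Fintype n] [Fintype p] [RCLike 𝕜]

lemma frobenius_norm_mul_transpose_mul_le (M : Matrix l m 𝕜) (Y : Matrix n m 𝕜)
    (N : Matrix n p 𝕜) : ‖M * Yᵀ * N‖ ≤ ‖M‖ * ‖N‖ * ‖Y‖ :=
  calc ‖M * Yᵀ * N‖ ≤ ‖M‖ * ‖Yᵀ‖ * ‖N‖ :=
        (frobenius_norm_mul _ _).trans
          (mul_le_mul_of_nonneg_right (frobenius_norm_mul _ _) (norm_nonneg _))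
    _ = ‖M‖ * ‖N‖ * ‖Y‖ := by rw [frobenius_norm_transpose]; ring

lemma frobenius_norm_perturbation_le (A B δA δB δC : Matrix n n 𝕜) (Y : Matrix n n 𝕜) :
    ‖δC + A * Yᵀ * δB + δA * Yᵀ * (B + δB)‖ ≤
      ‖δC‖ + (‖A‖ * ‖δB‖ + ‖δA‖ * (‖B‖ + ‖δB‖)) * ‖Y‖ := by
  have hA := frobenius_norm_mul_transpose_mul_le A Y δB
  have hδA := frobenius_norm_mul_transpose_mul_le δA Y (B + δB)
  have hB : ‖δA‖ * ‖B + δB‖ * ‖Y‖ ≤ ‖δA‖ * (‖B‖ + ‖δB‖) * ‖Y‖ := by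
    gcongr; exact norm_add_le B δB
  calc ‖δC + A * Yᵀ * δB + δA * Yᵀ * (B + δB)‖
      ≤ ‖δC‖ + ‖A * Yᵀ * δB‖ + ‖δA * Yᵀ * (B + δB)‖ := norm_add₃_le
    _ ≤ ‖δC‖ + (‖A‖ * ‖δB‖ + ‖δA‖ * (‖B‖ + ‖δB‖)) * ‖Y‖ := by linarith

end Matrix

/-- Perturbation bound for the ⊤-Stein equation. Let `S(X) = X − A Xᵀ B` be an
invertible (continuous) linear operator on `ℝ^{n×n}` (with the Frobenius norm).
Suppose `X` solves `S(X) = C` and `X + δX` solves the perturbed equation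
`X + δX = (A + δA)(X + δX)ᵀ(B + δB) + (C + δC)`. If `‖S⁻¹‖ Δ < 1`, where
`Δ = ‖A‖_F ‖δB‖_F + ‖δA‖_F (‖B‖_F + ‖δB‖_F)`, then
`‖δX‖_F ≤ ‖S⁻¹‖ (‖δC‖_F + Δ ‖X‖_F) / (1 − ‖S⁻¹‖ Δ)`. -/
theorem tstein_perturbation_bound {n : ℕ}
    (A B C X δA δB δC δX : Matrix (Fin n) (Fin n) ℝ)
    (S : Matrix (Fin n) (Fin n) ℝ ≃L[ℝ] Matrix (Fin n) (Fin n) ℝ)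
    (hS : ∀ Z : Matrix (Fin n) (Fin n) ℝ, S Z = Z - A * Zᵀ * B)
    (hX : X - A * Xᵀ * B = C)
    (hpert : X + δX = (A + δA) * (X + δX)ᵀ * (B + δB) + (C + δC))
    (hsmall : (@Norm.norm _ (ContinuousLinearMap.hasOpNorm (𝕜 := ℝ) (E := Matrix (Fin n) (Fin n) ℝ)
          (F := Matrix (Fin n) (Fin n) ℝ) (σ₁₂ := RingHom.id ℝ))
          (S.symm : Matrix (Fin n) (Fin n) ℝ →L[ℝ] Matrix (Fin n) (Fin n) ℝ)) *
        (‖A‖ * ‖δB‖ + ‖δA‖ * (‖B‖ + ‖δB‖)) < 1) :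
    ‖δX‖ ≤ (@Norm.norm _ (ContinuousLinearMap.hasOpNorm (𝕜 := ℝ) (E := Matrix (Fin n) (Fin n) ℝ)
          (F := Matrix (Fin n) (Fin n) ℝ) (σ₁₂ := RingHom.id ℝ))
          (S.symm : Matrix (Fin n) (Fin n) ℝ →L[ℝ] Matrix (Fin n) (Fin n) ℝ)) *
        (‖δC‖ + (‖A‖ * ‖δB‖ + ‖δA‖ * (‖B‖ + ‖δB‖)) * ‖X‖) /
        (1 - (@Norm.norm _ (ContinuousLinearMap.hasOpNorm (𝕜 := ℝ) (E := Matrix (Fin n) (Fin n) ℝ)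
          (F := Matrix (Fin n) (Fin n) ℝ) (σ₁₂ := RingHom.id ℝ))
          (S.symm : Matrix (Fin n) (Fin n) ℝ →L[ℝ] Matrix (Fin n) (Fin n) ℝ)) *
          (‖A‖ * ‖δB‖ + ‖δA‖ * (‖B‖ + ‖δB‖))) := by
  refine S.norm_le_div_of_norm_apply_le hsmall ?_
  calc ‖S δX‖ = ‖δC + A * (X + δX)ᵀ * δB + δA * (X + δX)ᵀ * (B + δB)‖ := by
        rw [hS, sub_mul_transpose_mul_eq_of_perturbed hX hpert]
    _ ≤ ‖δC‖ + (‖A‖ * ‖δB‖ + ‖δA‖ * (‖B‖ + ‖δB‖)) * ‖X + δX‖ :=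
        frobenius_norm_perturbation_le A B δA δB δC _
    _ ≤ ‖δC‖ + (‖A‖ * ‖δB‖ + ‖δA‖ * (‖B‖ + ‖δB‖)) * (‖X‖ + ‖δX‖) := by
        gcongr; exact norm_add_le X δX
end
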